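/- Fix n ≥ 2 and let g, f : ℂ → ℂ. Let S ⊂ ℂ be a compact set on which g is continuous and nonvanishing (S contains neither zeros nor poles of g) and on which f is continuous and nonvanishing. Then for every ε > 0 there exists λ₀ > 0 such that for every n×n real symmetric positive semidefinite matrix L with L𝟙 = 0 satisfying x*Lx ≥ λ₀‖x‖² for every complex vector x orthogonal to 𝟙, and every s ∈ S, the matrix g(s)⁻¹·I + f(s)·L is invertible and ‖(g(s)⁻¹·I + f(s)·L)⁻¹ − (1/n)g(s)·𝟙𝟙ᵀ‖ ≤ ε. -/

import Mathlib

open Matrix Complex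

/-- Spectral norm (L2 operator norm) of a complex matrix. -/
noncomputable def specNorm {n : ℕ} (A : Matrix (Fin n) (Fin n) ℂ) : ℝ :=
  ‖Matrix.toEuclideanCLM (𝕜 := ℂ) A‖

/-- The all-ones matrix. -/
def allOnes (n : ℕ) : Matrix (Fin n) (Fin n) ℂ := Matrix.of fun _ _ => 1

/-!
Write `M = a • 1 + b • A` with `a = g(s)⁻¹`, `b = f(s)` and `A` the Laplacian. Since `A` is
Hermitian with `A 𝟙 = 0`, `M` acts as `a` on constants and `𝟙ᵀ M = a 𝟙ᵀ`, so `M` preserves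
sum-zero vectors and `M⁻¹ - a⁻¹ P = M⁻¹ (1 - P)`, where `P = n⁻¹ 𝟙𝟙ᵀ` is the orthogonal projection
onto the constants. For a sum-zero `u`, Cauchy–Schwarz gives
`‖u‖ ‖M u‖ ≥ |⟪u, M u⟫| ≥ |b| ⟪u, A u⟫ - |a| ‖u‖² ≥ (|b| λ - |a|) ‖u‖²`, hence
`‖M⁻¹ (1 - P)‖ ≤ (|b| λ - |a|)⁻¹`. By compactness `|f|` is bounded below and `|g|⁻¹` above on `S`,
so a large `λ₀` makes `|b| λ₀ - |a| ≥ ε⁻¹` uniformly in `s`.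
-/

open scoped InnerProductSpace

theorem sub_mul_norm_le_norm_smul_add_smul {𝕜 E : Type*} [RCLike 𝕜] [NormedAddCommGroup E]
    [InnerProductSpace 𝕜 E] {x y : E} {lam : ℝ} (a b : 𝕜)
    (h : lam * ‖x‖ ^ 2 ≤ RCLike.re ⟪x, y⟫_𝕜) :
    (‖b‖ * lam - ‖a‖) * ‖x‖ ≤ ‖a • x + b • y‖ := by
  rcases (norm_nonneg x).eq_or_lt with hx | hx
  · simp [← hx]
  have hinner : ⟪x, a • x + b • y⟫_𝕜 = a * (‖x‖ : 𝕜) ^ 2 + b * ⟪x, y⟫_𝕜 := by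
    rw [inner_add_right, inner_smul_right, inner_smul_right, inner_self_eq_norm_sq_to_K]
  have hy : lam * ‖x‖ ^ 2 ≤ ‖⟪x, y⟫_𝕜‖ := h.trans (RCLike.re_le_norm _)
  have key : (‖b‖ * lam - ‖a‖) * ‖x‖ ^ 2 ≤ ‖x‖ * ‖a • x + b • y‖ :=
    calc (‖b‖ * lam - ‖a‖) * ‖x‖ ^ 2 ≤ ‖b * ⟪x, y⟫_𝕜‖ - ‖a * (‖x‖ : 𝕜) ^ 2‖ := by
          rw [norm_mul, norm_mul, norm_pow, RCLike.norm_ofReal, abs_norm]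
          nlinarith [norm_nonneg b]
      _ ≤ ‖a * (‖x‖ : 𝕜) ^ 2 + b * ⟪x, y⟫_𝕜‖ := by
          rw [add_comm]; exact norm_sub_le_norm_add _ _
      _ ≤ ‖x‖ * ‖a • x + b • y‖ := hinner ▸ norm_inner_le_norm _ _
  nlinarith

/-- For a Laplacian `A` this encodes `λ₂(A) ≥ λ`. -/
def QuadFormGeOnSumZero {ι : Type*} [Fintype ι] (A : Matrix ι ι ℂ) (lam : ℝ) : Prop :=
  ∀ x : ι → ℂ, ∑ i, x i = 0 → lam * ∑ i, ‖x i‖ ^ 2 ≤ (star x ⬝ᵥ A *ᵥ x).re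

section SmulOneAddSmul

variable {ι : Type*} [Fintype ι] {A : Matrix ι ι ℂ}

theorem one_vecMul_eq_zero_of_isHermitian (hA : A.IsHermitian) (hA1 : A *ᵥ 1 = 0) :
    1 ᵥ* A = 0 := by
  simpa [star_mulVec, hA.eq] using congrArg star hA1

theorem sum_smul_one_add_smul_mulVec [DecidableEq ι] (hA : A.IsHermitian) (hA1 : A *ᵥ 1 = 0)
    (a b : ℂ) (u : ι → ℂ) : ∑ i, ((a • 1 + b • A) *ᵥ u) i = a * ∑ i, u i := by
  have hAu : ∑ i, (A *ᵥ u) i = 0 := by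
    rw [← one_dotProduct, dotProduct_mulVec, one_vecMul_eq_zero_of_isHermitian hA hA1,
      zero_dotProduct]
  simp [add_mulVec, smul_mulVec, Finset.sum_add_distrib, ← Finset.mul_sum, hAu]

theorem mul_norm_le_norm_smul_one_add_smul_mulVec [DecidableEq ι] {lam κ : ℝ} {a b : ℂ}
    (hquad : QuadFormGeOnSumZero A lam) (hκ : κ ≤ ‖b‖ * lam - ‖a‖) {u : ι → ℂ}
    (hu : ∑ i, u i = 0) :
    κ * ‖WithLp.toLp 2 u‖ ≤ ‖WithLp.toLp 2 ((a • 1 + b • A) *ᵥ u)‖ := by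
  have h := hquad u hu
  rw [← EuclideanSpace.norm_sq_eq] at h
  calc κ * ‖WithLp.toLp 2 u‖ ≤ (‖b‖ * lam - ‖a‖) * ‖WithLp.toLp 2 u‖ := by gcongr
    _ ≤ ‖a • WithLp.toLp 2 u + b • WithLp.toLp 2 (A *ᵥ u)‖ := by
      refine sub_mul_norm_le_norm_smul_add_smul a b ?_
      rwa [EuclideanSpace.inner_toLp_toLp, dotProduct_comm]
    _ = _ := by simp [add_mulVec, smul_mulVec]

theorem isUnit_smul_one_add_smul [DecidableEq ι] (hA : A.IsHermitian) (hA1 : A *ᵥ 1 = 0)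
    {lam κ : ℝ} {a b : ℂ} (hquad : QuadFormGeOnSumZero A lam) (ha : a ≠ 0) (hκ0 : 0 < κ)
    (hκ : κ ≤ ‖b‖ * lam - ‖a‖) : IsUnit (a • 1 + b • A) := by
  refine mulVec_injective_iff_isUnit.mp <| (injective_iff_map_eq_zero (mulVecLin _)).mpr
    fun u hMu => ?_
  rw [mulVecLin_apply] at hMu
  have hu : ∑ i, u i = 0 := by
    simpa [ha, hMu] using sum_smul_one_add_smul_mulVec hA hA1 a b u
  have := mul_norm_le_norm_smul_one_add_smul_mulVec hquad hκ hu
  rw [hMu, WithLp.toLp_zero, norm_zero] at this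
  simpa using nonpos_of_mul_nonpos_right this hκ0

theorem mul_norm_inv_mulVec_le [DecidableEq ι] (hA : A.IsHermitian) (hA1 : A *ᵥ 1 = 0)
    {lam κ : ℝ} {a b : ℂ} (hquad : QuadFormGeOnSumZero A lam) (ha : a ≠ 0)
    (hκ : κ ≤ ‖b‖ * lam - ‖a‖) (hM : IsUnit (a • 1 + b • A)) {w : ι → ℂ}
    (hw : ∑ i, w i = 0) :
    κ * ‖WithLp.toLp 2 ((a • 1 + b • A)⁻¹ *ᵥ w)‖ ≤ ‖WithLp.toLp 2 w‖ := by
  have hMw : (a • 1 + b • A) *ᵥ (a • 1 + b • A)⁻¹ *ᵥ w = w := by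
    rw [mulVec_mulVec, mul_nonsing_inv _ ((isUnit_iff_isUnit_det _).mp hM), one_mulVec]
  have hu : ∑ i, ((a • 1 + b • A)⁻¹ *ᵥ w) i = 0 := by
    have := sum_smul_one_add_smul_mulVec hA hA1 a b ((a • 1 + b • A)⁻¹ *ᵥ w)
    rw [hMw, hw] at this
    exact (mul_eq_zero.mp this.symm).resolve_left ha
  simpa only [hMw] using mul_norm_le_norm_smul_one_add_smul_mulVec hquad hκ hu

end SmulOneAddSmul

section AllOnes

variable {n : ℕ}

theorem allOnes_mulVec (x : Fin n → ℂ) : allOnes n *ᵥ x = fun _ => ∑ j, x j := by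
  ext i; simp [allOnes, mulVec, dotProduct]

theorem allOnes_mul_allOnes : allOnes n * allOnes n = (n : ℂ) • allOnes n := by
  ext i j; simp [allOnes, mul_apply]

theorem isStarProjection_inv_smul_allOnes : IsStarProjection ((n : ℂ)⁻¹ • allOnes n) where
  isIdempotentElem := by
    rcases eq_or_ne (n : ℂ) 0 with hn | hn
    · simp [IsIdempotentElem, hn]
    · rw [IsIdempotentElem, smul_mul_smul_comm, allOnes_mul_allOnes, smul_smul]
      field_simp
  isSelfAdjoint := by
    ext i j; simp [allOnes, star_apply]

theorem specNorm_one_sub_inv_smul_allOnes_le : specNorm (1 - (n : ℂ)⁻¹ • allOnes n) ≤ 1 :=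
  (isStarProjection_inv_smul_allOnes.one_sub.map toEuclideanCLM).norm_le

theorem sum_one_sub_inv_smul_allOnes_mulVec (x : Fin n → ℂ) :
    ∑ i, ((1 - (n : ℂ)⁻¹ • allOnes n) *ᵥ x) i = 0 := by
  rcases n.eq_zero_or_pos with rfl | hn
  · simp
  simp only [sub_mulVec, one_mulVec, smul_mulVec, allOnes_mulVec, Pi.sub_apply, Pi.smul_apply,
    smul_eq_mul, Finset.sum_sub_distrib, Finset.sum_const, Finset.card_univ, Fintype.card_fin,
    nsmul_eq_mul]
  rw [mul_inv_cancel_left₀ (by exact_mod_cast hn.ne'), sub_self]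

variable {A : Matrix (Fin n) (Fin n) ℂ}

theorem smul_one_add_smul_mul_allOnes (hA1 : A *ᵥ 1 = 0) (a b : ℂ) :
    (a • 1 + b • A) * allOnes n = a • allOnes n := by
  have hAJ : A * allOnes n = 0 := by
    ext i j
    simpa [allOnes, mul_apply, mulVec, dotProduct] using congrFun hA1 i
  rw [add_mul, smul_mul_assoc, smul_mul_assoc, hAJ, one_mul, smul_zero, add_zero]

theorem inv_sub_smul_allOnes_eq_inv_mul (hA1 : A *ᵥ 1 = 0) {a b : ℂ} (ha : a ≠ 0)
    (hM : IsUnit (a • 1 + b • A)) :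
    (a • 1 + b • A)⁻¹ - ((n : ℂ)⁻¹ * a⁻¹) • allOnes n =
      (a • 1 + b • A)⁻¹ * (1 - (n : ℂ)⁻¹ • allOnes n) := by
  have hMP : (a • 1 + b • A) * (((n : ℂ)⁻¹ * a⁻¹) • allOnes n) = (n : ℂ)⁻¹ • allOnes n := by
    rw [mul_smul_comm, smul_one_add_smul_mul_allOnes hA1, smul_smul, mul_assoc,
      inv_mul_cancel₀ ha, mul_one]
  rw [mul_sub, mul_one, ← hMP, ← Matrix.mul_assoc,
    nonsing_inv_mul _ ((isUnit_iff_isUnit_det _).mp hM), Matrix.one_mul]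

theorem specNorm_inv_sub_smul_allOnes_le (hA : A.IsHermitian) (hA1 : A *ᵥ 1 = 0)
    {lam κ : ℝ} {a b : ℂ} (hquad : QuadFormGeOnSumZero A lam) (ha : a ≠ 0) (hκ0 : 0 < κ)
    (hκ : κ ≤ ‖b‖ * lam - ‖a‖) :
    IsUnit (a • 1 + b • A) ∧
      specNorm ((a • 1 + b • A)⁻¹ - ((n : ℂ)⁻¹ * a⁻¹) • allOnes n) ≤ κ⁻¹ := by
  have hM := isUnit_smul_one_add_smul hA hA1 hquad ha hκ0 hκ
  refine ⟨hM, ?_⟩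
  rw [specNorm, inv_sub_smul_allOnes_eq_inv_mul hA1 ha hM]
  refine ContinuousLinearMap.opNorm_le_bound _ (inv_nonneg.mpr hκ0.le) fun x => ?_
  have hQx : ‖toEuclideanCLM (𝕜 := ℂ) (1 - (n : ℂ)⁻¹ • allOnes n) x‖ ≤ ‖x‖ := by
    simpa using ContinuousLinearMap.le_of_opNorm_le _ specNorm_one_sub_inv_smul_allOnes_le x
  rw [le_inv_mul_iff₀ hκ0, map_mul, mul_apply_eq_comp]
  exact (mul_norm_inv_mulVec_le hA hA1 hquad ha hκ hM
    (sum_one_sub_inv_smul_allOnes_mulVec _)).trans hQx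

end AllOnes

theorem Matrix.IsHermitian.map_ofReal {ι : Type*} {L : Matrix ι ι ℝ} (hL : L.IsHermitian) :
    (L.map ofReal).IsHermitian :=
  hL.map _ fun _ => (conj_ofReal _).symm

theorem Matrix.map_ofReal_mulVec_one {ι : Type*} [Fintype ι] {L : Matrix ι ι ℝ}
    (hL1 : L *ᵥ 1 = 0) : L.map ofReal *ᵥ 1 = 0 := by
  ext i
  simpa [mulVec, dotProduct] using congrArg ofReal (congrFun hL1 i)

theorem IsCompact.exists_pos_le_norm {X E : Type*} [TopologicalSpace X] [NormedDivisionRing E]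
    {S : Set X} (hS : IsCompact S) {h : X → E} (hcont : ContinuousOn h S)
    (h0 : ∀ s ∈ S, h s ≠ 0) : ∃ c > 0, ∀ s ∈ S, c ≤ ‖h s‖ := by
  obtain ⟨C, hC⟩ := hS.exists_bound_of_continuousOn (hcont.inv₀ h0)
  refine ⟨(max C 1)⁻¹, by positivity, fun s hs => ?_⟩
  have := (hC s hs).trans (le_max_left C 1)
  rw [Pi.inv_apply, norm_inv] at this
  exact inv_le_of_inv_le₀ (norm_pos_iff.mpr (h0 s hs)) this

theorem stmt_8_general {n : ℕ} (g f : ℂ → ℂ)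
    (S : Set ℂ) (hS : IsCompact S)
    (hgcont : ContinuousOn g S) (hg0 : ∀ s ∈ S, g s ≠ 0)
    (hfcont : ContinuousOn f S) (hf0 : ∀ s ∈ S, f s ≠ 0)
    (ε : ℝ) (hε : 0 < ε) :
    ∃ lam0 > 0, ∀ L : Matrix (Fin n) (Fin n) ℝ,
      L.PosSemidef → L.mulVec (fun _ => 1) = 0 →
      (∀ x : Fin n → ℂ, (∑ i, x i = 0) →
        lam0 * ∑ i, ‖x i‖ ^ 2 ≤ (star x ⬝ᵥ (L.map (Complex.ofReal)).mulVec x).re) →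
      ∀ s ∈ S,
        IsUnit ((g s)⁻¹ • (1 : Matrix (Fin n) (Fin n) ℂ) + f s • L.map (Complex.ofReal)) ∧
        specNorm (((g s)⁻¹ • (1 : Matrix (Fin n) (Fin n) ℂ) + f s • L.map (Complex.ofReal))⁻¹
            - ((n : ℂ)⁻¹ * g s) • allOnes n) ≤ ε := by
  obtain ⟨cf, hcf, hf⟩ := hS.exists_pos_le_norm hfcont hf0
  obtain ⟨cg, hcg, hg⟩ := hS.exists_pos_le_norm hgcont hg0
  refine ⟨(cg⁻¹ + ε⁻¹) / cf, by positivity, fun L hL hL1 hquad s hs => ?_⟩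
  have hκ : ε⁻¹ ≤ ‖f s‖ * ((cg⁻¹ + ε⁻¹) / cf) - ‖(g s)⁻¹‖ := by
    have hgs : ‖(g s)⁻¹‖ ≤ cg⁻¹ := by
      rw [norm_inv]; exact inv_anti₀ hcg (hg s hs)
    have hfs : cg⁻¹ + ε⁻¹ ≤ ‖f s‖ * ((cg⁻¹ + ε⁻¹) / cf) :=
      calc cg⁻¹ + ε⁻¹ = cf * ((cg⁻¹ + ε⁻¹) / cf) := by field_simp
        _ ≤ ‖f s‖ * ((cg⁻¹ + ε⁻¹) / cf) := by gcongr; exact hf s hs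
    linarith
  simpa only [inv_inv] using specNorm_inv_sub_smul_allOnes_le hL.isHermitian.map_ofReal
    (map_ofReal_mulVec_one hL1) hquad (inv_ne_zero (hg0 s hs)) (inv_pos.mpr hε) hκ

/-- motivating example (Section 2.1), first claim: homogeneous
network coherence under high network connectivity. -/
theorem stmt_8 {n : ℕ} (hn : 2 ≤ n) (g f : ℂ → ℂ)
    (S : Set ℂ) (hS : IsCompact S)
    (hgcont : ContinuousOn g S) (hg0 : ∀ s ∈ S, g s ≠ 0)
    (hfcont : ContinuousOn f S) (hf0 : ∀ s ∈ S, f s ≠ 0)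
    (ε : ℝ) (hε : 0 < ε) :
    ∃ lam0 > 0, ∀ L : Matrix (Fin n) (Fin n) ℝ,
      L.PosSemidef → L.mulVec (fun _ => 1) = 0 →
      (∀ x : Fin n → ℂ, (∑ i, x i = 0) →
        lam0 * ∑ i, ‖x i‖ ^ 2 ≤ (star x ⬝ᵥ (L.map (Complex.ofReal)).mulVec x).re) →
      ∀ s ∈ S,
        IsUnit ((g s)⁻¹ • (1 : Matrix (Fin n) (Fin n) ℂ) + f s • L.map (Complex.ofReal)) ∧
        specNorm (((g s)⁻¹ • (1 : Matrix (Fin n) (Fin n) ℂ) + f s • L.map (Complex.ofReal))⁻¹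
            - ((n : ℂ)⁻¹ * g s) • allOnes n) ≤ ε :=
  stmt_8_general g f S hS hgcont hg0 hfcont hf0 ε hε
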